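/- (Critical states of the variance sum.) For a unit vector φ ∈ H, let W(φ) = Δ_φA² + Δ_φB² denote the sum of the variances of A and B in φ. If the unit vector ψ minimizes W over all unit vectors of H, i.e. W(ψ) ≤ W(φ) for every unit vector φ, then ψ is an eigenvector of (A − ⟨A⟩I)² + (B − ⟨B⟩I)² with eigenvalue ΔA² + ΔB², i.e. ((A − ⟨A⟩I)² + (B − ⟨B⟩I)²) ψ = (ΔA² + ΔB²) ψ, where ⟨A⟩, ⟨B⟩, ΔA², ΔB² are computed in ψ. -/

import Mathlib

/-! With the means frozen at `ψ`, the operator `T = Ă² + B̆²` has quadratic form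
`⟪φ, T φ⟫ = ‖Ă φ‖² + ‖B̆ φ‖² = W(φ) + (⟨A⟩ - ⟨A⟩_φ)² + (⟨B⟩ - ⟨B⟩_φ)² ≥ W(φ)` on unit vectors, with
equality at `φ = ψ`. So `ψ` also minimizes the quadratic form of the self-adjoint `T` on the unit
sphere, hence is an eigenvector of `T` with eigenvalue `⟪ψ, T ψ⟫ = W(ψ)`. -/

open scoped ComplexInnerProductSpace BigOperators

noncomputable section

variable {H : Type*} [NormedAddCommGroup H] [InnerProductSpace ℂ H]

/-- Expectation value ⟨A⟩ = Re ⟪ψ, A ψ⟫ of an operator in the state ψ. -/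
def expVal (ψ : H) (A : H →ₗ[ℂ] H) : ℝ := (⟪ψ, A ψ⟫).re

/-- Variance ΔA² = ⟨A²⟩ − ⟨A⟩². -/
def varOf (ψ : H) (A : H →ₗ[ℂ] H) : ℝ := (⟪ψ, A (A ψ)⟫).re - (expVal ψ A) ^ 2

/-- Standard deviation ΔA = √(ΔA²). -/
def stdDev (ψ : H) (A : H →ₗ[ℂ] H) : ℝ := Real.sqrt (varOf ψ A)

/-- The real number i⟨[A,B]⟩. -/
def commRe (ψ : H) (A B : H →ₗ[ℂ] H) : ℝ :=
  (Complex.I * ⟪ψ, (A ∘ₗ B - B ∘ₗ A) ψ⟫).re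

/-- The projection Π = I − |ψ⟩⟨ψ|. -/
def projPerp (ψ : H) : H →ₗ[ℂ] H :=
  LinearMap.id - ((innerSL ℂ ψ).smulRight ψ).toLinearMap

/-- The deviation operator Ă = A − ⟨A⟩I. -/
def devOp (ψ : H) (A : H →ₗ[ℂ] H) : H →ₗ[ℂ] H :=
  A - (expVal ψ A : ℂ) • LinearMap.id

/-- The operator C = −i[A,B]. -/
def opC (A B : H →ₗ[ℂ] H) : H →ₗ[ℂ] H := (-Complex.I) • (A ∘ₗ B - B ∘ₗ A)

/-- The operator F = ĂB̆ + B̆Ă. -/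
def opF (ψ : H) (A B : H →ₗ[ℂ] H) : H →ₗ[ℂ] H :=
  devOp ψ A ∘ₗ devOp ψ B + devOp ψ B ∘ₗ devOp ψ A

namespace LinearMap.IsSymmetric

variable {𝕜 E : Type*} [RCLike 𝕜] [NormedAddCommGroup E] [InnerProductSpace 𝕜 E]

open RCLike InnerProductSpace

theorem comp_self {S : E →ₗ[𝕜] E} (hS : S.IsSymmetric) : (S ∘ₗ S).IsSymmetric :=
  fun _ _ => (hS _ _).trans (hS _ _)

theorem re_inner_comp_self_apply {S : E →ₗ[𝕜] E} (hS : S.IsSymmetric) (x : E) :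
    re ⟪(S ∘ₗ S) x, x⟫_𝕜 = ‖S x‖ ^ 2 := by
  rw [comp_apply, hS, inner_self_eq_norm_sq]

theorem apply_eq_smul_of_isMinOn [CompleteSpace E] {T : E →ₗ[𝕜] E} (hT : T.IsSymmetric)
    {x₀ : E} (hx₀ : ‖x₀‖ = 1)
    (hmin : IsMinOn (fun x => re ⟪T x, x⟫_𝕜) (Metric.sphere 0 1) x₀) :
    T x₀ = (re ⟪T x₀, x₀⟫_𝕜 : 𝕜) • x₀ := by
  let T' : E →L[𝕜] E := ⟨T, hT.continuous⟩
  have hT' : IsSelfAdjoint T' := ContinuousLinearMap.isSelfAdjoint_iff_isSymmetric.mpr hT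
  have := hT'.eq_smul_self_of_isLocalExtrOn (x₀ := x₀) (Or.inl (hx₀ ▸ hmin).localize)
  rwa [ContinuousLinearMap.rayleighQuotient, ContinuousLinearMap.reApplyInnerSelf_apply, hx₀,
    one_pow, div_one] at this

end LinearMap.IsSymmetric

@[simp]
theorem devOp_apply (ψ : H) (A : H →ₗ[ℂ] H) (x : H) :
    devOp ψ A x = A x - (expVal ψ A : ℂ) • x := by
  simp [devOp]

theorem LinearMap.IsSymmetric.devOp {A : H →ₗ[ℂ] H} (hA : A.IsSymmetric) (ψ : H) :
    (devOp ψ A).IsSymmetric :=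
  hA.sub (LinearMap.IsSymmetric.id.smul (Complex.conj_ofReal _))

theorem norm_devOp_apply_sq {A : H →ₗ[ℂ] H} (hA : A.IsSymmetric) (ψ : H) {φ : H}
    (hφ : ‖φ‖ = 1) : ‖devOp ψ A φ‖ ^ 2 = varOf φ A + (expVal ψ A - expVal φ A) ^ 2 := by
  have hAA : ‖A φ‖ ^ 2 = (⟪φ, A (A φ)⟫).re := by
    rw [← hA, ← inner_self_eq_norm_sq (𝕜 := ℂ)]; rfl
  have hcross : RCLike.re ⟪A φ, (expVal ψ A : ℂ) • φ⟫ = expVal ψ A * expVal φ A := by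
    rw [inner_smul_right, hA]; exact Complex.re_ofReal_mul _ _
  rw [devOp_apply, norm_sub_sq (𝕜 := ℂ), hAA, hcross, norm_smul, Complex.norm_real, hφ, varOf]
  simp only [mul_one, Real.norm_eq_abs, sq_abs]
  ring

theorem varOf_le_norm_devOp_apply_sq {A : H →ₗ[ℂ] H} (hA : A.IsSymmetric) (ψ : H) {φ : H}
    (hφ : ‖φ‖ = 1) : varOf φ A ≤ ‖devOp ψ A φ‖ ^ 2 := by
  rw [norm_devOp_apply_sq hA ψ hφ]
  exact le_add_of_nonneg_right (sq_nonneg _)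

theorem norm_devOp_apply_self_sq {A : H →ₗ[ℂ] H} (hA : A.IsSymmetric) {ψ : H}
    (hψ : ‖ψ‖ = 1) : ‖devOp ψ A ψ‖ ^ 2 = varOf ψ A := by
  rw [norm_devOp_apply_sq hA ψ hψ, sub_self, zero_pow two_ne_zero, add_zero]

theorem critical_state_of_variance_sum
    {H : Type*} [NormedAddCommGroup H] [InnerProductSpace ℂ H] [FiniteDimensional ℂ H]
    (A B : H →ₗ[ℂ] H) (hA : A.IsSymmetric) (hB : B.IsSymmetric)
    (ψ : H) (hψ : ‖ψ‖ = 1)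
    (hmin : ∀ φ : H, ‖φ‖ = 1 → varOf ψ A + varOf ψ B ≤ varOf φ A + varOf φ B) :
    (devOp ψ A ∘ₗ devOp ψ A + devOp ψ B ∘ₗ devOp ψ B) ψ
      = ((varOf ψ A + varOf ψ B : ℝ) : ℂ) • ψ := by
  set T := devOp ψ A ∘ₗ devOp ψ A + devOp ψ B ∘ₗ devOp ψ B
  have hT : T.IsSymmetric := (hA.devOp ψ).comp_self.add (hB.devOp ψ).comp_self
  have hquad (x : H) : RCLike.re ⟪T x, x⟫ = ‖devOp ψ A x‖ ^ 2 + ‖devOp ψ B x‖ ^ 2 := by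
    rw [← (hA.devOp ψ).re_inner_comp_self_apply, ← (hB.devOp ψ).re_inner_comp_self_apply,
      LinearMap.add_apply, inner_add_left, map_add]
  have hval : RCLike.re ⟪T ψ, ψ⟫ = varOf ψ A + varOf ψ B := by
    rw [hquad, norm_devOp_apply_self_sq hA hψ, norm_devOp_apply_self_sq hB hψ]
  have hTmin : IsMinOn (fun x => RCLike.re ⟪T x, x⟫) (Metric.sphere 0 1) ψ := by
    intro φ hφ
    have hφ : ‖φ‖ = 1 := by simpa using hφ
    simp only [Set.mem_ofPred_eq, hval, hquad]
    linarith [hmin φ hφ, varOf_le_norm_devOp_apply_sq hA ψ hφ, varOf_le_norm_devOp_apply_sq hB ψ hφ]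
  rw [hT.apply_eq_smul_of_isMinOn hψ hTmin, hval]
  rfl
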